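/- arXiv:2401.18063 — 4 statements merged into one kernel-verified Lean document; each statement's English description precedes it below -/
import Mathlib

section
/- Let A be an invertible n×n real matrix, β a 1×n real row vector, and τ ≥ 0. Then ∫₀^τ t²·(−β·exp(tA)·A·1) dt = −τ²·β·exp(τA)·1 + 2τ·β·exp(τA)·A⁻¹·1 − 2·β·exp(τA)·A⁻²·1 + 2·β·A⁻²·1. (This is the numerator of the conditional second moment E[T² | T < τ]·P[T < τ] of a phase-type random variable T ~ PH(A, β).) -/
/-!
With `fₖ(t) = β ⬝ exp(tA) ⬝ A⁻ᵏ ⬝ 𝟙` one has `fₖ' = fₖ₋₁` for `k = 1, 2`, because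
`d/dt exp(tA) = exp(tA) A`. Two integrations by parts therefore give `t² f₀ - 2t f₁ + 2 f₂` as
an antiderivative of `t² f₀'`, and evaluating it between `0` and `τ` is the claimed identity.
-/

open Matrix intervalIntegral

section

-- Any norm would do: it only serves to differentiate `exp`, and the statement does not mention it.

attribute [local instance] Matrix.linftyOpNormedAddCommGroup Matrix.linftyOpNormedRing
  Matrix.linftyOpNormedAlgebra

theorem hasDerivAt_dotProduct_exp_smul_mulVec {𝕂 ι : Type*} [RCLike 𝕂] [Fintype ι]
    [DecidableEq ι] (A : Matrix ι ι 𝕂) (β v : ι → 𝕂) (t : 𝕂) :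
    HasDerivAt (fun s => β ⬝ᵥ (NormedSpace.exp (s • A) *ᵥ v))
      (β ⬝ᵥ (NormedSpace.exp (t • A) *ᵥ (A *ᵥ v))) t := by
  have h := ((dotProductBilin 𝕂 𝕂 β ∘ₗ (mulVecBilin 𝕂 𝕂).flip v).toContinuousLinearMap
    |>.hasFDerivAt).comp_hasDerivAt t (hasDerivAt_exp_smul_const A t)
  rw [mulVec_mulVec]
  exact h

end

theorem integral_sq_mul_eq_of_hasDerivAt {f₀ f₁ f₂ g : ℝ → ℝ} {a b : ℝ}
    (h₀ : ∀ t, HasDerivAt f₀ (g t) t) (h₁ : ∀ t, HasDerivAt f₁ (f₀ t) t)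
    (h₂ : ∀ t, HasDerivAt f₂ (f₁ t) t) (hg : IntervalIntegrable g MeasureTheory.volume a b) :
    ∫ t in a..b, t ^ 2 * g t
      = (b ^ 2 * f₀ b - 2 * b * f₁ b + 2 * f₂ b) - (a ^ 2 * f₀ a - 2 * a * f₁ a + 2 * f₂ a) := by
  refine integral_eq_sub_of_hasDerivAt (f := fun t => t ^ 2 * f₀ t - 2 * t * f₁ t + 2 * f₂ t)
    (fun t _ => ?_) (hg.continuousOn_mul (continuous_pow 2).continuousOn)
  have hsq : HasDerivAt (fun s => s ^ 2) (2 * t) t := by simpa using hasDerivAt_pow 2 t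
  have hF : HasDerivAt (fun s => s ^ 2 * f₀ s - 2 * s * f₁ s + 2 * f₂ s)
      (2 * t * f₀ t + t ^ 2 * g t - (2 * f₁ t + 2 * t * f₀ t) + 2 * f₁ t) t :=
    ((hsq.mul (h₀ t)).sub ((hasDerivAt_const_mul 2).mul (h₁ t))).add ((h₂ t).const_mul 2)
  exact hF.congr_deriv (by ring)

theorem mulVec_nonsing_inv_mulVec {ι R : Type*} [Fintype ι] [DecidableEq ι] [CommRing R]
    {A : Matrix ι ι R} (hA : IsUnit A.det) (v : ι → R) : A *ᵥ (A⁻¹ *ᵥ v) = v := by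
  rw [mulVec_mulVec, mul_nonsing_inv A hA, one_mulVec]

theorem phaseType_conditional_second_moment_general {n : ℕ} (A : Matrix (Fin n) (Fin n) ℝ)
    (hA : IsUnit A.det) (β : Fin n → ℝ) (τ : ℝ) :
    ∫ t in (0:ℝ)..τ, t ^ 2 * (-(β ⬝ᵥ (NormedSpace.exp (t • A) *ᵥ (A *ᵥ (1 : Fin n → ℝ)))))
      = -(τ ^ 2 * (β ⬝ᵥ (NormedSpace.exp (τ • A) *ᵥ (1 : Fin n → ℝ))))
        + 2 * τ * (β ⬝ᵥ (NormedSpace.exp (τ • A) *ᵥ (A⁻¹ *ᵥ (1 : Fin n → ℝ))))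
        - 2 * (β ⬝ᵥ (NormedSpace.exp (τ • A) *ᵥ ((A⁻¹ * A⁻¹) *ᵥ (1 : Fin n → ℝ))))
        + 2 * (β ⬝ᵥ ((A⁻¹ * A⁻¹) *ᵥ (1 : Fin n → ℝ))) := by
  have hderiv := hasDerivAt_dotProduct_exp_smul_mulVec A β
  have hg : Continuous fun t : ℝ => β ⬝ᵥ (NormedSpace.exp (t • A) *ᵥ (A *ᵥ 1)) :=
    continuous_iff_continuousAt.2 fun t => (hderiv _ t).continuousAt
  have hmoment := integral_sq_mul_eq_of_hasDerivAt (hderiv 1)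
    (fun t => by simpa only [mulVec_nonsing_inv_mulVec hA] using hderiv (A⁻¹ *ᵥ 1) t)
    (fun t => by simpa only [← mulVec_mulVec, mulVec_nonsing_inv_mulVec hA]
      using hderiv (A⁻¹ *ᵥ (A⁻¹ *ᵥ 1)) t)
    (hg.intervalIntegrable 0 τ)
  simp only [mul_neg, intervalIntegral.integral_neg, hmoment, zero_smul, NormedSpace.exp_zero,
    one_mulVec, ← mulVec_mulVec]
  ring

/-- For an invertible `n × n` real matrix `A`, a row vector `β` and `τ ≥ 0`,
`∫₀^τ t² ⬝ (-β ⬝ exp (t • A) ⬝ A ⬝ 𝟙) dt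
  = -τ² ⬝ β ⬝ exp (τ • A) ⬝ 𝟙 + 2τ ⬝ β ⬝ exp (τ • A) ⬝ A⁻¹ ⬝ 𝟙
    - 2 ⬝ β ⬝ exp (τ • A) ⬝ A⁻² ⬝ 𝟙 + 2 ⬝ β ⬝ A⁻² ⬝ 𝟙`,
the numerator of the conditional second moment `E[T² | T < τ] ⬝ P[T < τ]` of `T ~ PH(A, β)`. -/
theorem phaseType_conditional_second_moment {n : ℕ} (A : Matrix (Fin n) (Fin n) ℝ)
    (hA : IsUnit A.det) (β : Fin n → ℝ) (τ : ℝ) (hτ : 0 ≤ τ) :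
    ∫ t in (0:ℝ)..τ, t ^ 2 * (-(β ⬝ᵥ (NormedSpace.exp (t • A) *ᵥ (A *ᵥ (1 : Fin n → ℝ)))))
      = -(τ ^ 2 * (β ⬝ᵥ (NormedSpace.exp (τ • A) *ᵥ (1 : Fin n → ℝ))))
        + 2 * τ * (β ⬝ᵥ (NormedSpace.exp (τ • A) *ᵥ (A⁻¹ *ᵥ (1 : Fin n → ℝ))))
        - 2 * (β ⬝ᵥ (NormedSpace.exp (τ • A) *ᵥ ((A⁻¹ * A⁻¹) *ᵥ (1 : Fin n → ℝ))))
        + 2 * (β ⬝ᵥ ((A⁻¹ * A⁻¹) *ᵥ (1 : Fin n → ℝ))) :=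
  phaseType_conditional_second_moment_general A hA β τ
end

section
/- Let A be an n×n real matrix for which there exist constants C ≥ 0 and c > 0 with ‖exp(tA)‖ ≤ C·exp(−ct) for all t ≥ 0, and let β be a 1×n real row vector. Then ∫₀^∞ t·(−β·exp(tA)·A·1) dt = −β·A⁻¹·1; that is, the first moment of a phase-type random variable T ~ PH(A, β) equals E[T] = −β·A⁻¹·1. -/
/-! The decay bound forces `A` to be invertible: otherwise `0 ∈ σ(A)`, so `1 = exp 0` lies in the
spectrum of every `exp (t • A)`, and `‖exp (t • A)‖` could not tend to `0`. Then
`t ↦ (t • A⁻¹ - A⁻¹ * A⁻¹) * exp (t • A)` is an antiderivative of `t • exp (t • A)` vanishing at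
infinity, so `∫₀^∞ t • exp (t • A) dt = A⁻¹ * A⁻¹`, and the linear functional
`M ↦ β ⬝ᵥ (M *ᵥ (A *ᵥ 1))` turns this into `β ⬝ᵥ (A⁻¹ *ᵥ 1)`. -/

open Matrix MeasureTheory

attribute [local instance] Matrix.linftyOpNormedRing Matrix.linftyOpNormedSpace
  Matrix.linftyOpNormedAlgebra

open Filter Topology NormedSpace

section BanachAlgebra

variable {R : Type*} [NormedRing R] [NormedAlgebra ℝ R]

theorem isUnit_of_tendsto_exp_smul_atTop_zero [CompleteSpace R] {a : R}
    (h : Tendsto (fun t : ℝ => exp (t • a)) atTop (𝓝 0)) : IsUnit a := by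
  obtain ⟨t, ht⟩ := (h.norm.mul_const ‖(1 : R)‖).eventually_lt_const
    (by rw [norm_zero, zero_mul]; exact one_pos) |>.exists
  by_contra ha
  have hta : ¬IsUnit (t • a) := fun hta =>
    ha ((Algebra.commute_algebraMap_left t a).isUnit_mul_iff.mp (Algebra.smul_def t a ▸ hta)).2
  have h1 : (1 : ℝ) ∈ spectrum ℝ (exp (t • a)) := by
    simpa using spectrum.exp_mem_exp (t • a) ((spectrum.zero_mem_iff ℝ).2 hta)
  simpa using (spectrum.norm_le_norm_mul_of_mem h1).trans_lt ht

theorem tendsto_pow_smul_exp_smul_atTop_zero {a : R} {C c : ℝ} (hc : 0 < c)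
    (hdecay : ∀ t : ℝ, 0 ≤ t → ‖exp (t • a)‖ ≤ C * Real.exp (-c * t)) (k : ℕ) :
    Tendsto (fun t : ℝ => t ^ k • exp (t • a)) atTop (𝓝 0) := by
  have hbound : Tendsto (fun t : ℝ => t ^ k * (C * Real.exp (-c * t))) atTop (𝓝 0) := by
    simpa [Real.rpow_natCast, mul_left_comm] using
      (tendsto_rpow_mul_exp_neg_mul_atTop_nhds_zero k c hc).const_mul C
  refine squeeze_zero_norm' ?_ hbound
  filter_upwards [eventually_ge_atTop 0] with t ht
  rw [norm_smul, norm_pow, Real.norm_of_nonneg ht]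
  exact mul_le_mul_of_nonneg_left (hdecay t ht) (pow_nonneg ht k)

theorem continuous_exp_smul [CompleteSpace R] (a : R) : Continuous fun t : ℝ => exp (t • a) :=
  continuous_iff_continuousAt.2 fun t => (hasDerivAt_exp_smul_const' a t).continuousAt

theorem integrableOn_Ioi_smul_exp_smul [CompleteSpace R] {a : R} {C c : ℝ} (hc : 0 < c)
    (hdecay : ∀ t : ℝ, 0 ≤ t → ‖exp (t • a)‖ ≤ C * Real.exp (-c * t)) :
    IntegrableOn (fun t : ℝ => t • exp (t • a)) (Set.Ioi 0) := by
  have hbound := (integrableOn_rpow_mul_exp_neg_mul_rpow (p := 1) (s := 1) (by norm_num)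
    one_pos hc).const_mul C
  refine hbound.mono' (continuous_id.smul (continuous_exp_smul a)).aestronglyMeasurable ?_
  filter_upwards [ae_restrict_mem measurableSet_Ioi] with t (ht : 0 < t)
  rw [norm_smul, Real.norm_of_nonneg ht.le, Real.rpow_one, mul_left_comm]
  exact mul_le_mul_of_nonneg_left (hdecay t ht.le) ht.le

theorem hasDerivAt_smul_sub_mul_exp_smul [CompleteSpace R] {a b : R} (hba : b * a = 1) (t : ℝ) :
    HasDerivAt (fun s : ℝ => (s • b - b * b) * exp (s • a)) (t • exp (t • a)) t := by
  have hlin : HasDerivAt (fun s : ℝ => s • b - b * b) b t := by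
    simpa using ((hasDerivAt_id t).smul_const b).sub_const (b * b)
  refine (hlin.mul (hasDerivAt_exp_smul_const' a t)).congr_deriv ?_
  rw [sub_mul, smul_mul_assoc, mul_assoc, ← mul_assoc b a, hba, one_mul]
  abel

theorem integral_Ioi_smul_exp_smul [CompleteSpace R] {a b : R} (hba : b * a = 1) {C c : ℝ}
    (hc : 0 < c)
    (hdecay : ∀ t : ℝ, 0 ≤ t → ‖exp (t • a)‖ ≤ C * Real.exp (-c * t)) :
    ∫ t in Set.Ioi (0 : ℝ), t • exp (t • a) = b * b := by
  have hlim : Tendsto (fun s : ℝ => (s • b - b * b) * exp (s • a)) atTop (𝓝 0) := by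
    have h := ((tendsto_pow_smul_exp_smul_atTop_zero hc hdecay 1).const_mul b).sub
      ((tendsto_pow_smul_exp_smul_atTop_zero hc hdecay 0).const_mul (b * b))
    simp only [pow_one, pow_zero, one_smul, mul_zero, sub_zero] at h
    refine h.congr fun s => ?_
    rw [sub_mul, smul_mul_assoc, mul_smul_comm]
  rw [integral_Ioi_of_hasDerivAt_of_tendsto' (fun t _ => hasDerivAt_smul_sub_mul_exp_smul hba t)
    (integrableOn_Ioi_smul_exp_smul hc hdecay) hlim]
  simp

end BanachAlgebra

theorem LinearMap.integral_comp_comm_of_finiteDimensional {α E F : Type*} [MeasurableSpace α]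
    {μ : Measure α} [NormedAddCommGroup E] [NormedSpace ℝ E] [FiniteDimensional ℝ E]
    [NormedAddCommGroup F] [NormedSpace ℝ F] [CompleteSpace F] (L : E →ₗ[ℝ] F) {φ : α → E}
    (hφ : Integrable φ μ) : ∫ x, L (φ x) ∂μ = L (∫ x, φ x ∂μ) :=
  have : CompleteSpace E := FiniteDimensional.complete ℝ E
  (LinearMap.toContinuousLinearMap L).integral_comp_comm hφ

theorem phaseType_first_moment_general {n : ℕ} (A : Matrix (Fin n) (Fin n) ℝ)
    (C c : ℝ) (hc : 0 < c)
    (hdecay : ∀ t : ℝ, 0 ≤ t → ‖NormedSpace.exp (t • A)‖ ≤ C * Real.exp (-c * t))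
    (β : Fin n → ℝ) :
    ∫ t in Set.Ioi (0:ℝ),
        t * (-(β ⬝ᵥ (NormedSpace.exp (t • A) *ᵥ (A *ᵥ (1 : Fin n → ℝ)))))
      = -(β ⬝ᵥ (A⁻¹ *ᵥ (1 : Fin n → ℝ))) := by
  have hA : IsUnit A := isUnit_of_tendsto_exp_smul_atTop_zero <| by
    simpa using tendsto_pow_smul_exp_smul_atTop_zero hc hdecay 0
  have hinv : A⁻¹ * A = 1 := nonsing_inv_mul A ((isUnit_iff_isUnit_det A).mp hA)
  let L : Matrix (Fin n) (Fin n) ℝ →ₗ[ℝ] ℝ :=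
    { toFun := fun M => β ⬝ᵥ (M *ᵥ (A *ᵥ 1))
      map_add' := fun M N => by rw [add_mulVec, dotProduct_add]
      map_smul' := fun r M => by rw [smul_mulVec, dotProduct_smul]; rfl }
  have hintegrand (t : ℝ) :
      t * -(β ⬝ᵥ (exp (t • A) *ᵥ (A *ᵥ 1))) = -L (t • exp (t • A)) := by
    change _ = -(β ⬝ᵥ ((t • exp (t • A)) *ᵥ (A *ᵥ 1)))
    rw [smul_mulVec, dotProduct_smul, smul_eq_mul, mul_neg]
  simp_rw [hintegrand]
  rw [integral_neg, neg_inj]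
  -- not `rw`: in the statement `exp` on matrices uses the product topology, in the lemmas the
  -- topology of the operator norm; the two agree only after unfolding.
  refine (L.integral_comp_comm_of_finiteDimensional
    (integrableOn_Ioi_smul_exp_smul hc hdecay)).trans ?_
  rw [integral_Ioi_smul_exp_smul hinv hc hdecay]
  change β ⬝ᵥ ((A⁻¹ * A⁻¹) *ᵥ (A *ᵥ 1)) = _
  rw [mulVec_mulVec, Matrix.mul_assoc, hinv, Matrix.mul_one]

/-- If `‖exp (t • A)‖ ≤ C ⬝ exp (-c t)` for all `t ≥ 0` with `C ≥ 0`, `c > 0`,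
and `β` is a row vector, then `∫₀^∞ t ⬝ (-β ⬝ exp (t • A) ⬝ A ⬝ 𝟙) dt = -β ⬝ A⁻¹ ⬝ 𝟙`:
the first moment of `T ~ PH(A, β)` is `E[T] = -β ⬝ A⁻¹ ⬝ 𝟙`. -/
theorem phaseType_first_moment {n : ℕ} (A : Matrix (Fin n) (Fin n) ℝ)
    (C c : ℝ) (hC : 0 ≤ C) (hc : 0 < c)
    (hdecay : ∀ t : ℝ, 0 ≤ t → ‖NormedSpace.exp (t • A)‖ ≤ C * Real.exp (-c * t))
    (β : Fin n → ℝ) :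
    ∫ t in Set.Ioi (0:ℝ),
        t * (-(β ⬝ᵥ (NormedSpace.exp (t • A) *ᵥ (A *ᵥ (1 : Fin n → ℝ)))))
      = -(β ⬝ᵥ (A⁻¹ *ᵥ (1 : Fin n → ℝ))) :=
  phaseType_first_moment_general A C c hc hdecay β
end

section
/- Let A be an n×n real matrix for which there exist constants C ≥ 0 and c > 0 with ‖exp(tA)‖ ≤ C·exp(−ct) for all t ≥ 0, and let β be a 1×n real row vector. Then ∫₀^∞ t²·(−β·exp(tA)·A·1) dt = 2·β·A⁻²·1; that is, the second moment of a phase-type random variable T ~ PH(A, β) equals E[T²] = 2·β·A⁻²·1. -/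
/-!
Write `E t = exp (t • A)`. The decay bound makes every `t ^ k • E t` integrable on `(0, ∞)` and
negligible at infinity. Since `E' = E * A = A * E`, the fundamental theorem of calculus gives
`(∫ E) * A = A * ∫ E = -1`, so `A` is invertible with `∫ E = -A⁻¹`; differentiating
`t ^ (k + 1) • E t` likewise gives `M (k + 1) * A = -(k + 1) • M k` for the moments
`M k = ∫ t ^ k • E t`, hence `M k = k! • (-A⁻¹) ^ (k + 1)`. The scalar integral is the image of
`M 2` under the linear functional `M ↦ -β ⬝ᵥ (M *ᵥ (A *ᵥ 1))`, and `2 • (-A⁻¹) ^ 3 * A = -2 • A⁻²`.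
-/

open Matrix MeasureTheory

attribute [local instance] Matrix.linftyOpNormedRing Matrix.linftyOpNormedSpace

open Filter Set Topology Real
open scoped Nat Ring

theorem integrableOn_pow_mul_exp_neg_mul (k : ℕ) {c : ℝ} (hc : 0 < c) :
    IntegrableOn (fun t : ℝ => t ^ k * rexp (-c * t)) (Ioi 0) := by
  have h := integrableOn_rpow_mul_exp_neg_mul_rpow (s := k) (p := 1)
    (by linarith [k.cast_nonneg (α := ℝ)]) one_pos hc
  refine h.congr_fun (fun t _ => ?_) measurableSet_Ioi
  simp only [rpow_natCast, rpow_one]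

theorem tendsto_pow_mul_exp_neg_mul_atTop (k : ℕ) {c : ℝ} (hc : 0 < c) :
    Tendsto (fun t : ℝ => t ^ k * rexp (-c * t)) atTop (𝓝 0) := by
  have h := ((tendsto_pow_mul_exp_neg_atTop_nhds_zero k).comp
    (tendsto_id.const_mul_atTop hc)).const_mul (c ^ k)⁻¹
  rw [mul_zero] at h
  refine h.congr fun t => ?_
  simp only [Function.comp_apply, id, mul_pow, neg_mul]
  field_simp

section ExpMoments

variable {𝔸 : Type*} [NormedRing 𝔸] [NormedAlgebra ℝ 𝔸]

def ExpDecay (A : 𝔸) (C c : ℝ) : Prop :=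
  ∀ t : ℝ, 0 ≤ t → ‖NormedSpace.exp (t • A)‖ ≤ C * rexp (-c * t)

variable {A : 𝔸} {C c : ℝ}

theorem norm_pow_smul_exp_smul_le (hdecay : ExpDecay A C c) (k : ℕ) {t : ℝ} (ht : 0 ≤ t) :
    ‖t ^ k • NormedSpace.exp (t • A)‖ ≤ C * (t ^ k * rexp (-c * t)) := by
  rw [norm_smul, norm_pow, Real.norm_of_nonneg ht, mul_left_comm]
  exact mul_le_mul_of_nonneg_left (hdecay t ht) (by positivity)

theorem tendsto_pow_smul_exp_smul_atTop (hc : 0 < c) (hdecay : ExpDecay A C c) (k : ℕ) :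
    Tendsto (fun t : ℝ => t ^ k • NormedSpace.exp (t • A)) atTop (𝓝 0) := by
  refine squeeze_zero_norm' ?_
    (by simpa only [mul_zero] using (tendsto_pow_mul_exp_neg_mul_atTop k hc).const_mul C)
  filter_upwards [eventually_ge_atTop 0] with t ht
  exact norm_pow_smul_exp_smul_le hdecay k ht

variable [CompleteSpace 𝔸]

theorem integrableOn_pow_smul_exp_smul (hc : 0 < c) (hdecay : ExpDecay A C c) (k : ℕ) :
    IntegrableOn (fun t : ℝ => t ^ k • NormedSpace.exp (t • A)) (Ioi 0) := by
  have hcont : Continuous fun t : ℝ => t ^ k • NormedSpace.exp (t • A) :=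
    (continuous_pow k).smul (continuous_iff_continuousAt.2 fun t =>
      (hasDerivAt_exp_smul_const A t).continuousAt)
  refine ((integrableOn_pow_mul_exp_neg_mul k hc).const_mul C).mono'
    hcont.aestronglyMeasurable.restrict ?_
  filter_upwards [ae_restrict_mem measurableSet_Ioi] with t ht
  exact norm_pow_smul_exp_smul_le hdecay k ht.le

variable (hc : 0 < c) (hdecay : ExpDecay A C c)
include hc hdecay

theorem integrableOn_exp_smul : IntegrableOn (fun t : ℝ => NormedSpace.exp (t • A)) (Ioi 0) := by
  simpa using integrableOn_pow_smul_exp_smul hc hdecay 0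

theorem integral_exp_smul_mul_self :
    (∫ t in Ioi (0 : ℝ), NormedSpace.exp (t • A)) * A = -1 := by
  have hint := integrableOn_exp_smul hc hdecay
  rw [← integral_mul_const_of_integrable hint,
    integral_Ioi_of_hasDerivAt_of_tendsto' (fun t _ => hasDerivAt_exp_smul_const A t)
      (hint.mul_const A) (by simpa using tendsto_pow_smul_exp_smul_atTop hc hdecay 0)]
  simp

theorem self_mul_integral_exp_smul :
    A * ∫ t in Ioi (0 : ℝ), NormedSpace.exp (t • A) = -1 := by
  have hint := integrableOn_exp_smul hc hdecay
  rw [← integral_const_mul_of_integrable hint,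
    integral_Ioi_of_hasDerivAt_of_tendsto' (fun t _ => hasDerivAt_exp_smul_const' A t)
      (hint.const_mul A) (by simpa using tendsto_pow_smul_exp_smul_atTop hc hdecay 0)]
  simp

theorem isUnit_of_exp_decay : IsUnit A :=
  ⟨⟨A, -∫ t in Ioi (0 : ℝ), NormedSpace.exp (t • A),
    by rw [mul_neg, self_mul_integral_exp_smul hc hdecay, neg_neg],
    by rw [neg_mul, integral_exp_smul_mul_self hc hdecay, neg_neg]⟩, rfl⟩

theorem integral_exp_smul : ∫ t in Ioi (0 : ℝ), NormedSpace.exp (t • A) = -A⁻¹ʳ := by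
  rw [← neg_one_mul, Ring.eq_mul_inverse_iff_mul_eq _ _ _ (isUnit_of_exp_decay hc hdecay)]
  exact integral_exp_smul_mul_self hc hdecay

theorem integral_pow_succ_smul_exp_smul_mul (k : ℕ) :
    (∫ t in Ioi (0 : ℝ), t ^ (k + 1) • NormedSpace.exp (t • A)) * A
      = -((k + 1 : ℝ) • ∫ t in Ioi (0 : ℝ), t ^ k • NormedSpace.exp (t • A)) := by
  have hderiv : ∀ t : ℝ, HasDerivAt (fun u : ℝ => u ^ (k + 1) • NormedSpace.exp (u • A))
      (t ^ (k + 1) • NormedSpace.exp (t • A) * A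
        + (k + 1 : ℝ) • t ^ k • NormedSpace.exp (t • A)) t := fun t =>
    ((hasDerivAt_pow (k + 1) t).smul (hasDerivAt_exp_smul_const A t)).congr_deriv (by
      rw [smul_mul_assoc, mul_smul, Nat.add_sub_cancel]; push_cast; rfl)
  have hint := integrableOn_pow_smul_exp_smul hc hdecay
  have hint_mul : IntegrableOn (fun t : ℝ => t ^ (k + 1) • NormedSpace.exp (t • A) * A) (Ioi 0) :=
    (hint (k + 1)).mul_const A
  have hint_smul : IntegrableOn
      (fun t : ℝ => (k + 1 : ℝ) • t ^ k • NormedSpace.exp (t • A)) (Ioi 0) :=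
    (hint k).smul (k + 1 : ℝ)
  have hftc := integral_Ioi_of_hasDerivAt_of_tendsto' (fun t _ => hderiv t)
    (hint_mul.add hint_smul) (tendsto_pow_smul_exp_smul_atTop hc hdecay (k + 1))
  rw [integral_add hint_mul hint_smul, integral_smul,
    integral_mul_const_of_integrable (hint (k + 1))] at hftc
  simpa [eq_neg_iff_add_eq_zero] using hftc

theorem integral_pow_smul_exp_smul (k : ℕ) :
    ∫ t in Ioi (0 : ℝ), t ^ k • NormedSpace.exp (t • A) = (k ! : ℝ) • (-A⁻¹ʳ) ^ (k + 1) := by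
  induction k with
  | zero => simpa using integral_exp_smul hc hdecay
  | succ k ih =>
    have hA := isUnit_of_exp_decay hc hdecay
    rw [← Ring.mul_inverse_cancel_right _ (∫ t in Ioi (0 : ℝ), t ^ (k + 1) • _) hA,
      integral_pow_succ_smul_exp_smul_mul hc hdecay, ih, pow_succ _ (k + 1), Nat.factorial_succ]
    push_cast
    rw [smul_smul, neg_mul, smul_mul_assoc, mul_neg, smul_neg]

end ExpMoments

noncomputable def dotProductMulVecCLM {ι κ : Type*} [Fintype ι] [Fintype κ]
    (v : ι → ℝ) (w : κ → ℝ) : Matrix ι κ ℝ →L[ℝ] ℝ :=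
  LinearMap.toContinuousLinearMap
    { toFun := fun M => v ⬝ᵥ (M *ᵥ w)
      map_add' := fun M N => by simp only [add_mulVec, dotProduct_add]
      map_smul' := fun r M => by simp only [smul_mulVec, dotProduct_smul, RingHom.id_apply] }

@[simp]
theorem dotProductMulVecCLM_apply {ι κ : Type*} [Fintype ι] [Fintype κ]
    (v : ι → ℝ) (w : κ → ℝ) (M : Matrix ι κ ℝ) :
    dotProductMulVecCLM v w M = v ⬝ᵥ (M *ᵥ w) :=
  rfl

attribute [local instance] Matrix.linftyOpNormedAlgebra

theorem phaseType_second_moment_general {n : ℕ} (A : Matrix (Fin n) (Fin n) ℝ)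
    (C c : ℝ) (hc : 0 < c)
    (hdecay : ∀ t : ℝ, 0 ≤ t → ‖NormedSpace.exp (t • A)‖ ≤ C * Real.exp (-c * t))
    (β : Fin n → ℝ) :
    ∫ t in Set.Ioi (0:ℝ),
        t ^ 2 * (-(β ⬝ᵥ (NormedSpace.exp (t • A) *ᵥ (A *ᵥ (1 : Fin n → ℝ)))))
      = 2 * (β ⬝ᵥ ((A⁻¹ * A⁻¹) *ᵥ (1 : Fin n → ℝ))) := by
  set L := dotProductMulVecCLM (-β) (A *ᵥ 1)
  have hcube : (-A⁻¹ʳ) ^ 3 * A = -(A⁻¹ʳ * A⁻¹ʳ) := by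
    simp [pow_succ, mul_assoc, Ring.inverse_mul_cancel _ (isUnit_of_exp_decay hc hdecay)]
  calc ∫ t in Ioi (0 : ℝ), t ^ 2 * -(β ⬝ᵥ (NormedSpace.exp (t • A) *ᵥ (A *ᵥ 1)))
      = ∫ t in Ioi (0 : ℝ), L (t ^ 2 • NormedSpace.exp (t • A)) := by
        simp [L]
    _ = L (∫ t in Ioi (0 : ℝ), t ^ 2 • NormedSpace.exp (t • A)) :=
        L.integral_comp_comm (integrableOn_pow_smul_exp_smul hc hdecay 2)
    _ = L ((2 ! : ℝ) • (-A⁻¹ʳ) ^ (2 + 1)) := congrArg L (integral_pow_smul_exp_smul hc hdecay 2)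
    _ = 2 * (β ⬝ᵥ ((A⁻¹ * A⁻¹) *ᵥ 1)) := by
        simp [L, mulVec_mulVec, hcube, nonsing_inv_eq_ringInverse, neg_mulVec]

/-- If `‖exp (t • A)‖ ≤ C ⬝ exp (-c t)` for all `t ≥ 0` with `C ≥ 0`, `c > 0`,
and `β` is a row vector, then `∫₀^∞ t² ⬝ (-β ⬝ exp (t • A) ⬝ A ⬝ 𝟙) dt = 2 ⬝ β ⬝ A⁻² ⬝ 𝟙`:
the second moment of `T ~ PH(A, β)` is `E[T²] = 2 β A⁻² 𝟙`. -/
theorem phaseType_second_moment {n : ℕ} (A : Matrix (Fin n) (Fin n) ℝ)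
    (C c : ℝ) (hC : 0 ≤ C) (hc : 0 < c)
    (hdecay : ∀ t : ℝ, 0 ≤ t → ‖NormedSpace.exp (t • A)‖ ≤ C * Real.exp (-c * t))
    (β : Fin n → ℝ) :
    ∫ t in Set.Ioi (0:ℝ),
        t ^ 2 * (-(β ⬝ᵥ (NormedSpace.exp (t • A) *ᵥ (A *ᵥ (1 : Fin n → ℝ)))))
      = 2 * (β ⬝ᵥ ((A⁻¹ * A⁻¹) *ᵥ (1 : Fin n → ℝ))) :=
  phaseType_second_moment_general A C c hc hdecay β
end

section
/- Let A₁ be an n×n real matrix for which there exist constants C ≥ 0 and c > 0 with ‖exp(tA₁)‖ ≤ C·exp(−ct) for all t ≥ 0, let μ > 0, set A₂ = A₁ − μI, let β be a 1×n real row vector, and let τ ≥ 0. Then ∫₀^τ (t²/2)·(−β·exp(tA₁)·A₁·1) dt + ∫₀^∞ ((τ+s)²/2)·(−β·exp(τA₁)·exp(sA₂)·A₂·1) ds = τ·β·exp(τA₁)·(A₁⁻¹ − A₂⁻¹)·1 + β·A₁⁻²·1 + β·exp(τA₁)·(A₂⁻² − A₁⁻²)·1. (This is the paper's closed-form expression for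 the expected age cost a_j(τ).) -/
/-!
Both integrands have the form `((σ + s)² / 2) exp (s A) A`, and integrating by parts twice shows
that `exp (s A) (agePoly A (σ + s))` is a primitive. The decay bound makes `A₁` invertible (a
kernel vector would be fixed by every `exp (t A₁)`), and `exp (s A₂) = e^{-μ s} exp (s A₁)` decays
at the faster rate `c + μ`, so `A₂` is invertible as well and the primitive vanishes at infinity,
its polynomial factor being absorbed by half of the exponential rate. Both integrals are
therefore boundary terms, and their sum is `A₁⁻² + exp (τ A₁) (agePoly A₂ τ − agePoly A₁ τ)`.
-/

open Matrix MeasureTheory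

attribute [local instance] Matrix.linftyOpNormedRing Matrix.linftyOpNormedSpace

attribute [local instance] Matrix.linftyOpNormedAlgebra

open NormedSpace Filter Asymptotics Topology Set

namespace ExpectedAgeCost

variable {n : ℕ}

lemma isBigO_shift_pow_exp (σ : ℝ) (k : ℕ) {b : ℝ} (hb : 0 < b) :
    (fun s : ℝ => (σ + s) ^ k) =O[atTop] fun s => Real.exp (b * s) := by
  refine ((isLittleO_pow_exp_pos_mul_atTop k hb).isBigO.comp_tendsto
    (tendsto_atTop_add_const_left atTop σ tendsto_id)).trans
      (IsBigO.of_bound (Real.exp (b * σ)) (Eventually.of_forall fun s => ?_))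
  simp [mul_add, Real.exp_add]

lemma isBigO_shift_pow_smul (σ : ℝ) (k : ℕ) (M : Matrix (Fin n) (Fin n) ℝ) {b : ℝ}
    (hb : 0 < b) : (fun s : ℝ => (σ + s) ^ k • M) =O[atTop] fun s => Real.exp (b * s) := by
  simpa using (isBigO_shift_pow_exp σ k hb).smul
    (isBigO_const_const (l := atTop) M (one_ne_zero : (1 : ℝ) ≠ 0))

lemma tendsto_exp_neg_mul_atTop {b : ℝ} (hb : 0 < b) :
    Tendsto (fun s : ℝ => Real.exp (-b * s)) atTop (𝓝 0) :=
  Real.tendsto_exp_atBot.comp <| tendsto_id.const_mul_atTop_of_neg (neg_neg_of_pos hb)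

lemma isUnit_det_of_tendsto_exp_smul {A : Matrix (Fin n) (Fin n) ℝ}
    (h : Tendsto (fun t : ℝ => exp (t • A)) atTop (𝓝 0)) : IsUnit A.det := by
  rw [isUnit_iff_ne_zero, Ne, ← Matrix.exists_mulVec_eq_zero_iff]
  rintro ⟨v, hv, hAv⟩
  set V := vecMulVec v v
  have hAV : A * V = 0 := by simp [V, mul_vecMulVec, hAv]
  have hderiv (t : ℝ) : HasDerivAt (fun u : ℝ => exp (u • A) * V) 0 t := by
    have h := (hasDerivAt_exp_smul_const A t).mul_const V
    rw [Matrix.mul_assoc, hAV, Matrix.mul_zero] at h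
    exact h
  have hconst (t : ℝ) : exp (t • A) * V = V := by
    simpa using is_const_of_deriv_eq_zero (fun u => (hderiv u).differentiableAt)
      (fun u => (hderiv u).deriv) t 0
  have hV : V = 0 := tendsto_nhds_unique (tendsto_const_nhds.congr fun t => (hconst t).symm)
    (by simpa using h.mul_const V)
  simp [V, hv] at hV

lemma exp_smul_sub_smul_one (A : Matrix (Fin n) (Fin n) ℝ) (μ s : ℝ) :
    exp (s • (A - μ • 1)) = Real.exp (-(μ * s)) • exp (s • A) := by
  have hcomm : Commute (s • A) (algebraMap ℝ _ (-(μ * s))) :=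
    Algebra.commute_algebraMap_right _ _
  rw [show s • (A - μ • 1) = s • A + algebraMap ℝ _ (-(μ * s)) by
      rw [Algebra.algebraMap_eq_smul_one]; module,
    Matrix.exp_add_of_commute _ _ hcomm,
    show exp (algebraMap ℝ (Matrix (Fin n) (Fin n) ℝ) (-(μ * s))) = _ from
      (algebraMap_exp_comm _).symm,
    ← Real.exp_eq_exp_ℝ, Algebra.algebraMap_eq_smul_one, mul_smul_comm, mul_one]

noncomputable def agePoly (A : Matrix (Fin n) (Fin n) ℝ) (q : ℝ) : Matrix (Fin n) (Fin n) ℝ :=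
  (q ^ 2 / 2) • 1 - q • A⁻¹ + A⁻¹ * A⁻¹

lemma agePoly_zero (A : Matrix (Fin n) (Fin n) ℝ) : agePoly A 0 = A⁻¹ * A⁻¹ := by
  simp [agePoly]

lemma agePoly_sub_agePoly (A B : Matrix (Fin n) (Fin n) ℝ) (q : ℝ) :
    agePoly B q - agePoly A q = q • (A⁻¹ - B⁻¹) + (B⁻¹ * B⁻¹ - A⁻¹ * A⁻¹) := by
  simp only [agePoly]; module

lemma hasDerivAt_agePoly (A : Matrix (Fin n) (Fin n) ℝ) (q : ℝ) :
    HasDerivAt (agePoly A) (q • 1 - A⁻¹) q := by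
  have h := (((hasDerivAt_pow 2 q).div_const 2).smul_const (1 : Matrix (Fin n) (Fin n) ℝ)).sub
    ((hasDerivAt_id q).smul_const A⁻¹) |>.add_const (A⁻¹ * A⁻¹)
  refine h.congr_deriv ?_
  simp

lemma mul_agePoly {A : Matrix (Fin n) (Fin n) ℝ} (hA : IsUnit A.det) (q : ℝ) :
    A * agePoly A q = (q ^ 2 / 2) • A - q • 1 + A⁻¹ := by
  rw [agePoly, Matrix.mul_add, Matrix.mul_sub, ← Matrix.mul_assoc, Matrix.mul_nonsing_inv _ hA,
    mul_smul_comm, mul_smul_comm, Matrix.mul_one, Matrix.one_mul, Matrix.mul_nonsing_inv _ hA]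

lemma hasDerivAt_exp_smul_mul_agePoly {A : Matrix (Fin n) (Fin n) ℝ} (hA : IsUnit A.det)
    (σ s : ℝ) :
    HasDerivAt (fun s => exp (s • A) * agePoly A (σ + s))
      (exp (s • A) * (((σ + s) ^ 2 / 2) • A)) s := by
  have h := (hasDerivAt_exp_smul_const A s).mul
    ((hasDerivAt_agePoly A (σ + s)).scomp s ((hasDerivAt_id s).const_add σ))
  refine h.congr_deriv ?_
  rw [Function.comp_apply, Matrix.mul_assoc, one_smul, ← Matrix.mul_add, mul_agePoly hA]
  congr 1
  abel

lemma isBigO_agePoly (A : Matrix (Fin n) (Fin n) ℝ) (σ : ℝ) {b : ℝ} (hb : 0 < b) :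
    (fun s : ℝ => agePoly A (σ + s)) =O[atTop] fun s => Real.exp (b * s) := by
  refine (((isBigO_shift_pow_smul σ 2 ((1 / 2 : ℝ) • 1) hb).sub
    (isBigO_shift_pow_smul σ 1 A⁻¹ hb)).add
    (isBigO_shift_pow_smul σ 0 (A⁻¹ * A⁻¹) hb)).congr_left fun s => ?_
  simp only [agePoly, smul_smul, pow_one, pow_zero, one_smul]
  ring_nf

lemma intervalIntegral_exp_smul_mul (ℓ : Matrix (Fin n) (Fin n) ℝ →L[ℝ] ℝ)
    {A : Matrix (Fin n) (Fin n) ℝ} (hA : IsUnit A.det) (τ : ℝ) :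
    ∫ t in (0 : ℝ)..τ, ℓ (exp (t • A) * ((t ^ 2 / 2) • A)) =
      ℓ (exp (τ • A) * agePoly A τ) - ℓ (A⁻¹ * A⁻¹) := by
  have h := intervalIntegral.integral_eq_sub_of_hasDerivAt
    (fun t _ => ℓ.hasFDerivAt.comp_hasDerivAt t (hasDerivAt_exp_smul_mul_agePoly hA 0 t))
    (Continuous.intervalIntegrable (by fun_prop) 0 τ)
  simp only [Function.comp_apply, zero_add, zero_smul, exp_zero, Matrix.one_mul,
    agePoly_zero] at h
  exact h

section Decay

variable {A : Matrix (Fin n) (Fin n) ℝ} {C c : ℝ}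
  (hdecay : ∀ t : ℝ, 0 ≤ t → ‖exp (t • A)‖ ≤ C * Real.exp (-c * t))
include hdecay

lemma norm_exp_smul_sub_smul_one_le (μ t : ℝ) (ht : 0 ≤ t) :
    ‖exp (t • (A - μ • 1))‖ ≤ C * Real.exp (-(c + μ) * t) := by
  rw [exp_smul_sub_smul_one, norm_smul, Real.norm_of_nonneg (Real.exp_pos _).le]
  calc Real.exp (-(μ * t)) * ‖exp (t • A)‖
      ≤ Real.exp (-(μ * t)) * (C * Real.exp (-c * t)) := by gcongr; exact hdecay t ht
    _ = C * Real.exp (-(c + μ) * t) := by rw [mul_left_comm, ← Real.exp_add]; ring_nf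

lemma isBigO_exp_smul : (fun t : ℝ => exp (t • A)) =O[atTop] fun t => Real.exp (-c * t) :=
  IsBigO.of_bound C <| (eventually_ge_atTop 0).mono fun t ht => by
    simpa [Real.norm_of_nonneg (Real.exp_pos _).le] using hdecay t ht

lemma isBigO_exp_smul_mul {P : ℝ → Matrix (Fin n) (Fin n) ℝ}
    (hP : P =O[atTop] fun s => Real.exp (c / 2 * s)) :
    (fun s : ℝ => exp (s • A) * P s) =O[atTop] fun s => Real.exp (-(c / 2) * s) := by
  refine ((isBigO_exp_smul hdecay).mul hP).congr_right fun s => ?_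
  rw [← Real.exp_add]; ring_nf

lemma isUnit_det_of_norm_exp_smul_le (hc : 0 < c) : IsUnit A.det :=
  isUnit_det_of_tendsto_exp_smul <|
    (isBigO_exp_smul hdecay).trans_tendsto (tendsto_exp_neg_mul_atTop hc)

lemma integral_Ioi_exp_smul_mul (hc : 0 < c) (ℓ : Matrix (Fin n) (Fin n) ℝ →L[ℝ] ℝ) (σ : ℝ) :
    ∫ s in Ioi (0 : ℝ), ℓ (exp (s • A) * (((σ + s) ^ 2 / 2) • A)) = -ℓ (agePoly A σ) := by
  have hc₂ := half_pos hc
  have hderiv (s : ℝ) := ℓ.hasFDerivAt.comp_hasDerivAt s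
    (hasDerivAt_exp_smul_mul_agePoly (isUnit_det_of_norm_exp_smul_le hdecay hc) σ s)
  have hint : IntegrableOn (fun s => ℓ (exp (s • A) * (((σ + s) ^ 2 / 2) • A))) (Ioi 0) :=
    integrable_of_isBigO_exp_neg hc₂ (by fun_prop) <| (ℓ.isBigO_comp _ _).trans <|
      isBigO_exp_smul_mul hdecay <| (isBigO_shift_pow_smul σ 2 ((1 / 2 : ℝ) • A) hc₂).congr_left
        fun s => by rw [smul_smul]; congr 1; ring
  have hlim : Tendsto (fun s => ℓ (exp (s • A) * agePoly A (σ + s))) atTop (𝓝 0) := by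
    have h := (ℓ.continuous.tendsto 0).comp <|
      (isBigO_exp_smul_mul hdecay (isBigO_agePoly A σ hc₂)).trans_tendsto
        (tendsto_exp_neg_mul_atTop hc₂)
    rw [map_zero] at h
    exact h
  refine (integral_Ioi_of_hasDerivAt_of_tendsto' (fun s _ => hderiv s) hint hlim).trans ?_
  simp

end Decay

noncomputable def weightedRowSum (β : Fin n → ℝ) : Matrix (Fin n) (Fin n) ℝ →L[ℝ] ℝ :=
  LinearMap.toContinuousLinearMap
    { toFun := fun M => β ⬝ᵥ (M *ᵥ 1)
      map_add' := fun M N => by simp [Matrix.add_mulVec, dotProduct_add]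
      map_smul' := fun r M => by simp [Matrix.smul_mulVec, dotProduct_smul] }

@[simp]
lemma weightedRowSum_apply (β : Fin n → ℝ) (M : Matrix (Fin n) (Fin n) ℝ) :
    weightedRowSum β M = β ⬝ᵥ (M *ᵥ 1) := rfl

lemma weightedRowSum_vecMul (β : Fin n → ℝ) (E M : Matrix (Fin n) (Fin n) ℝ) :
    weightedRowSum (β ᵥ* E) M = weightedRowSum β (E * M) := by
  simp [← Matrix.mulVec_mulVec, Matrix.dotProduct_mulVec]

end ExpectedAgeCost

open ExpectedAgeCost

theorem csmdp_expected_age_cost_general {n : ℕ} (A₁ : Matrix (Fin n) (Fin n) ℝ)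
    (C c : ℝ) (hc : 0 < c)
    (hdecay : ∀ t : ℝ, 0 ≤ t → ‖NormedSpace.exp (t • A₁)‖ ≤ C * Real.exp (-c * t))
    (μ : ℝ) (hμ : 0 < μ)
    (A₂ : Matrix (Fin n) (Fin n) ℝ)
    (hA₂ : A₂ = A₁ - μ • (1 : Matrix (Fin n) (Fin n) ℝ))
    (β : Fin n → ℝ) (τ : ℝ) :
    (∫ t in (0:ℝ)..τ,
        (t ^ 2 / 2) * (-(β ⬝ᵥ (NormedSpace.exp (t • A₁) *ᵥ (A₁ *ᵥ (1 : Fin n → ℝ))))))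
      + (∫ s in Set.Ioi (0:ℝ),
          ((τ + s) ^ 2 / 2) * (-(β ⬝ᵥ ((NormedSpace.exp (τ • A₁) * NormedSpace.exp (s • A₂))
              *ᵥ (A₂ *ᵥ (1 : Fin n → ℝ))))))
      = τ * (β ⬝ᵥ ((NormedSpace.exp (τ • A₁) * (A₁⁻¹ - A₂⁻¹)) *ᵥ (1 : Fin n → ℝ)))
        + β ⬝ᵥ ((A₁⁻¹ * A₁⁻¹) *ᵥ (1 : Fin n → ℝ))
        + β ⬝ᵥ ((NormedSpace.exp (τ • A₁) * (A₂⁻¹ * A₂⁻¹ - A₁⁻¹ * A₁⁻¹))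
            *ᵥ (1 : Fin n → ℝ)) := by
  have hdecay₂ : ∀ t : ℝ, 0 ≤ t → ‖exp (t • A₂)‖ ≤ C * Real.exp (-(c + μ) * t) :=
    hA₂ ▸ norm_exp_smul_sub_smul_one_le hdecay μ
  have h₁ := intervalIntegral_exp_smul_mul (weightedRowSum β)
    (isUnit_det_of_norm_exp_smul_le hdecay hc) τ
  set E := exp (τ • A₁)
  have h₂ := integral_Ioi_exp_smul_mul hdecay₂ (by linarith) (weightedRowSum (β ᵥ* E)) τ
  have e₁ (t : ℝ) : t ^ 2 / 2 * -(β ⬝ᵥ (exp (t • A₁) *ᵥ (A₁ *ᵥ 1))) =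
      -weightedRowSum β (exp (t • A₁) * ((t ^ 2 / 2) • A₁)) := by
    simp [Matrix.mulVec_mulVec]
  have e₂ (s : ℝ) : (τ + s) ^ 2 / 2 * -(β ⬝ᵥ ((E * exp (s • A₂)) *ᵥ (A₂ *ᵥ 1))) =
      -weightedRowSum (β ᵥ* E) (exp (s • A₂) * (((τ + s) ^ 2 / 2) • A₂)) := by
    rw [weightedRowSum_vecMul]
    simp [Matrix.mulVec_mulVec, Matrix.mul_assoc]
  simp only [e₁, e₂, intervalIntegral.integral_neg, integral_neg, h₁, h₂]
  have key : E * agePoly A₂ τ - E * agePoly A₁ τ =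
      τ • (E * (A₁⁻¹ - A₂⁻¹)) + E * (A₂⁻¹ * A₂⁻¹ - A₁⁻¹ * A₁⁻¹) := by
    rw [← Matrix.mul_sub, agePoly_sub_agePoly, Matrix.mul_add, mul_smul_comm]
  have hkey := congrArg (weightedRowSum β) key
  rw [map_sub, map_add, map_smul, smul_eq_mul] at hkey
  rw [weightedRowSum_vecMul]
  simp only [weightedRowSum_apply] at hkey ⊢
  linarith

/-- Let `A₁` satisfy `‖exp (t • A₁)‖ ≤ C ⬝ exp (-c t)` for all `t ≥ 0`
(`C ≥ 0`, `c > 0`), let `μ > 0`, set `A₂ = A₁ - μI`, let `β` be a row vector and `τ ≥ 0`.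
Then
`∫₀^τ (t²/2) (-β exp (t A₁) A₁ 𝟙) dt + ∫₀^∞ ((τ+s)²/2) (-β exp (τ A₁) exp (s A₂) A₂ 𝟙) ds
  = τ β exp (τ A₁) (A₁⁻¹ - A₂⁻¹) 𝟙 + β A₁⁻² 𝟙 + β exp (τ A₁) (A₂⁻² - A₁⁻²) 𝟙`,
the closed form of the expected age cost `a_j(τ)`. -/
theorem csmdp_expected_age_cost {n : ℕ} (A₁ : Matrix (Fin n) (Fin n) ℝ)
    (C c : ℝ) (hC : 0 ≤ C) (hc : 0 < c)
    (hdecay : ∀ t : ℝ, 0 ≤ t → ‖NormedSpace.exp (t • A₁)‖ ≤ C * Real.exp (-c * t))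
    (μ : ℝ) (hμ : 0 < μ)
    (A₂ : Matrix (Fin n) (Fin n) ℝ)
    (hA₂ : A₂ = A₁ - μ • (1 : Matrix (Fin n) (Fin n) ℝ))
    (β : Fin n → ℝ) (τ : ℝ) (hτ : 0 ≤ τ) :
    (∫ t in (0:ℝ)..τ,
        (t ^ 2 / 2) * (-(β ⬝ᵥ (NormedSpace.exp (t • A₁) *ᵥ (A₁ *ᵥ (1 : Fin n → ℝ))))))
      + (∫ s in Set.Ioi (0:ℝ),
          ((τ + s) ^ 2 / 2) * (-(β ⬝ᵥ ((NormedSpace.exp (τ • A₁) * NormedSpace.exp (s • A₂))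
              *ᵥ (A₂ *ᵥ (1 : Fin n → ℝ))))))
      = τ * (β ⬝ᵥ ((NormedSpace.exp (τ • A₁) * (A₁⁻¹ - A₂⁻¹)) *ᵥ (1 : Fin n → ℝ)))
        + β ⬝ᵥ ((A₁⁻¹ * A₁⁻¹) *ᵥ (1 : Fin n → ℝ))
        + β ⬝ᵥ ((NormedSpace.exp (τ • A₁) * (A₂⁻¹ * A₂⁻¹ - A₁⁻¹ * A₁⁻¹))
            *ᵥ (1 : Fin n → ℝ)) :=
  csmdp_expected_age_cost_general A₁ C c hc hdecay μ hμ A₂ hA₂ β τ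
end
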